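/- Let χ ∈ R^k be a probability vector with strictly decreasing positive entries γ_1 > γ_2 > ... > γ_k > 0, and fix 1 ≤ i < j ≤ k. For ε ≥ 0 define χ(i,j,ε) = (γ_1, ..., γ_i - ε, ..., γ_j + ε, ..., γ_k). If for probability vectors ψ, φ ∈ R^n and some ε_0 > 0 (with χ(i,j,ε_0) still sorted non-increasingly) we have ψ ⊗ χ ≺ φ ⊗ χ(i,j,ε_0), χ(i,j,ε_0) ≺ χ, and χ(i,j,ε_0) ≠ χ, then for every ε with 0 < ε < ε_0, the same three relations hold with ε in place of ε_0: ψ ⊗ χ ≺ φ ⊗ χ(i,j,ε), χ(i,j,ε) ≺ χ, and χ(i,j,ε) ≠ χ. -/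
import Mathlib


open Finset

/-- `eSum v m` is the sum of the `m` largest entries of `v`
(the supremum of sums over subsets of cardinality `m`). -/
noncomputable def eSum {ι : Type} [Fintype ι] (v : ι → ℝ) (m : ℕ) : ℝ :=
  sSup {x | ∃ s : Finset ι, s.card = m ∧ x = ∑ i ∈ s, v i}

/-- Majorization `x ≺ y`: partial sums of largest entries of `x` are dominated
by those of `y`, with equal total sums. -/
def Maj {ι κ : Type} [Fintype ι] [Fintype κ] (x : ι → ℝ) (y : κ → ℝ) : Prop :=
  (∀ m : ℕ, 1 ≤ m → m < Fintype.card ι → eSum x m ≤ eSum y m) ∧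
    ∑ i, x i = ∑ j, y j

/-- Strict majorization `x ◁ y`: all inequalities strict, total sums equal. -/
def SMaj {ι κ : Type} [Fintype ι] [Fintype κ] (x : ι → ℝ) (y : κ → ℝ) : Prop :=
  (∀ m : ℕ, 1 ≤ m → m < Fintype.card ι → eSum x m < eSum y m) ∧
    ∑ i, x i = ∑ j, y j

/-- Global uniformity: smallest entry divided by largest entry. -/
noncomputable def gu {ι : Type} [Fintype ι] (v : ι → ℝ) : ℝ :=
  sInf (Set.range v) / sSup (Set.range v)

/-- The set of ratios `v b / v a` over consecutive distinct values `v b < v a`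
(no value strictly in between). -/
def ratioSet {ι : Type} [Fintype ι] (v : ι → ℝ) : Set ℝ :=
  {r | ∃ a b : ι, v b < v a ∧ (¬ ∃ c : ι, v b < v c ∧ v c < v a) ∧ r = v b / v a}

open Classical in
noncomputable def lu {ι : Type} [Fintype ι] (v : ι → ℝ) : ℝ :=
  if (∃ a b : ι, v a ≠ v b) then sInf (ratioSet v) else 1

open Classical in
/-- Maximal local uniformity: maximum ratio of consecutive distinct values;
`1` for a constant vector. -/
noncomputable def Lu {ι : Type} [Fintype ι] (v : ι → ℝ) : ℝ :=
  if (∃ a b : ι, v a ≠ v b) then sSup (ratioSet v) else 1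

/-- Tensor (Kronecker) product of two vectors. -/
def tens {ι κ : Type} (x : ι → ℝ) (y : κ → ℝ) : ι × κ → ℝ :=
  fun p => x p.1 * y p.2

/-- `k`-fold tensor power of a vector. -/
def tpow {n : ℕ} (v : Fin n → ℝ) (k : ℕ) : (Fin k → Fin n) → ℝ :=
  fun f => ∏ i, v (f i)

/-- A probability vector: nonnegative entries summing to one. -/
def IsProb {ι : Type} [Fintype ι] (v : ι → ℝ) : Prop :=
  (∀ i, 0 ≤ v i) ∧ ∑ i, v i = 1

/-- `v` sorted in non-increasing order. -/
noncomputable def sortDesc {n : ℕ} (v : Fin n → ℝ) : Fin n → ℝ :=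
  fun i => v (Tuple.sort v i.rev)

/-- Shannon entropy (base 2), with the convention `0 log 0 = 0`. -/
noncomputable def entH {ι : Type} [Fintype ι] (v : ι → ℝ) : ℝ :=
  -∑ i, v i * Real.logb 2 (v i)


lemma eSumSet_finite {ι : Type} [Fintype ι] (v : ι → ℝ) (m : ℕ) :
    {x | ∃ s : Finset ι, s.card = m ∧ x = ∑ i ∈ s, v i}.Finite := by
  have h : {x | ∃ s : Finset ι, s.card = m ∧ x = ∑ i ∈ s, v i}
      = (fun s : Finset ι => ∑ i ∈ s, v i) '' {s | s.card = m} := by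
    ext x
    simp only [Set.mem_setOf_eq, Set.mem_image]
    constructor
    · rintro ⟨s, hs, rfl⟩; exact ⟨s, hs, rfl⟩
    · rintro ⟨s, hs, rfl⟩; exact ⟨s, hs, rfl⟩
  rw [h]
  exact (Set.toFinite _).image _

lemma sum_le_eSum {ι : Type} [Fintype ι] (v : ι → ℝ) (s : Finset ι) :
    ∑ i ∈ s, v i ≤ eSum v s.card :=
  le_csSup (eSumSet_finite v s.card).bddAbove ⟨s, rfl, rfl⟩

lemma eSum_comb_le {ι : Type} [Fintype ι] (x y : ι → ℝ) (a b : ℝ)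
    (ha : 0 ≤ a) (hb : 0 ≤ b) (m : ℕ) (hm : m ≤ Fintype.card ι) :
    eSum (fun i => a * x i + b * y i) m ≤ a * eSum x m + b * eSum y m := by
  obtain ⟨s, -, hs⟩ := Finset.exists_subset_card_eq
    (show m ≤ (Finset.univ : Finset ι).card by simpa using hm)
  unfold eSum
  refine csSup_le ⟨∑ i ∈ s, (a * x i + b * y i), s, hs, rfl⟩ ?_
  rintro z ⟨u, hu, rfl⟩
  rw [Finset.sum_add_distrib, ← Finset.mul_sum, ← Finset.mul_sum]
  have hx := sum_le_eSum x u
  have hy := sum_le_eSum y u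
  rw [hu] at hx hy
  exact add_le_add (mul_le_mul_of_nonneg_left hx ha) (mul_le_mul_of_nonneg_left hy hb)

lemma eSum_comp_equiv {ι : Type} [Fintype ι] (v : ι → ℝ) (e : ι ≃ ι) (m : ℕ) :
    eSum (fun i => v (e i)) m = eSum v m := by
  unfold eSum
  congr 1
  ext x
  simp only [Set.mem_setOf_eq]
  constructor
  · rintro ⟨s, hs, rfl⟩
    exact ⟨s.map e.toEmbedding, by simp [hs], (Finset.sum_map s e.toEmbedding v).symm⟩
  · rintro ⟨s, hs, rfl⟩
    refine ⟨s.map e.symm.toEmbedding, by simp [hs], ?_⟩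
    rw [Finset.sum_map]
    simp

lemma eSum_comb_equiv_le {ι : Type} [Fintype ι] (u : ι → ℝ) (e : ι ≃ ι) (l : ℝ)
    (h0 : 0 ≤ l) (h1 : l ≤ 1) (m : ℕ) (hm : m ≤ Fintype.card ι) :
    eSum (fun p => l * u p + (1 - l) * u (e p)) m ≤ eSum u m := by
  calc eSum (fun p => l * u p + (1 - l) * u (e p)) m
      ≤ l * eSum u m + (1 - l) * eSum (fun p => u (e p)) m :=
        eSum_comb_le _ _ _ _ h0 (by linarith) m hm
    _ = eSum u m := by rw [eSum_comp_equiv]; ring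

/-- if the `ε₀`-transfer works, every smaller positive `ε` also
works. -/
theorem transfer_monotone {n k : ℕ} (ψ φ : Fin n → ℝ) (χ : Fin k → ℝ)
    (hψ : IsProb ψ) (hφ : IsProb φ)
    (hχprob : IsProb χ) (hχpos : ∀ i, 0 < χ i)
    (hdec : ∀ i j : Fin k, i < j → χ j < χ i)
    (i j : Fin k) (hij : i < j) (ε₀ : ℝ) (hε₀ : 0 < ε₀)
    (hsorted : ∀ a b : Fin k, a ≤ b →
      Function.update (Function.update χ i (χ i - ε₀)) j (χ j + ε₀) b ≤
        Function.update (Function.update χ i (χ i - ε₀)) j (χ j + ε₀) a)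
    (h1 : Maj (tens ψ χ) (tens φ (Function.update (Function.update χ i (χ i - ε₀)) j (χ j + ε₀))))
    (h2 : Maj (Function.update (Function.update χ i (χ i - ε₀)) j (χ j + ε₀)) χ)
    (h3 : Function.update (Function.update χ i (χ i - ε₀)) j (χ j + ε₀) ≠ χ) :
    ∀ ε : ℝ, 0 < ε → ε < ε₀ →
      Maj (tens ψ χ) (tens φ (Function.update (Function.update χ i (χ i - ε)) j (χ j + ε))) ∧
      Maj (Function.update (Function.update χ i (χ i - ε)) j (χ j + ε)) χ ∧
      Function.update (Function.update χ i (χ i - ε)) j (χ j + ε) ≠ χ := by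
  intro ε hε hεε₀
  have hijne : i ≠ j := ne_of_lt hij
  set χ₀ : Fin k → ℝ := Function.update (Function.update χ i (χ i - ε₀)) j (χ j + ε₀) with hχ₀def
  set χ₁ : Fin k → ℝ := Function.update (Function.update χ i (χ i - ε)) j (χ j + ε) with hχ₁def
  have hχ₀j : χ₀ j = χ j + ε₀ := by simp [hχ₀def]
  have hχ₀i : χ₀ i = χ i - ε₀ := by
    simp [hχ₀def, Function.update_apply, hijne]
  have hχ₀o : ∀ b : Fin k, b ≠ i → b ≠ j → χ₀ b = χ b := by
    intro b hbi hbj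
    simp [hχ₀def, Function.update_apply, hbi, hbj]
  have hχ₁j : χ₁ j = χ j + ε := by simp [hχ₁def]
  have hχ₁i : χ₁ i = χ i - ε := by
    simp [hχ₁def, Function.update_apply, hijne]
  have hχ₁o : ∀ b : Fin k, b ≠ i → b ≠ j → χ₁ b = χ b := by
    intro b hbi hbj
    simp [hχ₁def, Function.update_apply, hbi, hbj]
  have hgap : χ j + ε₀ ≤ χ i - ε₀ := by
    have := hsorted i j (le_of_lt hij)
    rw [hχ₀j, hχ₀i] at this
    exact this
  -- the convex-combination parameter expressing χ₁ between χ and χ₀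
  set t : ℝ := ε / ε₀ with htdef
  have ht : t * ε₀ = ε := div_mul_cancel₀ ε (ne_of_gt hε₀)
  have ht0 : 0 ≤ t := div_nonneg hε.le hε₀.le
  have ht1 : t ≤ 1 := le_of_lt ((div_lt_one hε₀).2 hεε₀)
  have hcomb1 : χ₁ = fun b => (1 - t) * χ b + t * χ₀ b := by
    funext b
    by_cases hbj : b = j
    · subst hbj
      rw [hχ₁j, hχ₀j]; linear_combination -ht
    · by_cases hbi : b = i
      · subst hbi
        rw [hχ₁i, hχ₀i]; linear_combination ht
      · rw [hχ₁o b hbi hbj, hχ₀o b hbi hbj]; ring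
  -- the T-transform parameter expressing χ₀ between χ₁ and its (i j)-swap
  set d : ℝ := χ i - χ j - 2 * ε with hddef
  have hd0 : 0 < d := by
    have : 2 * ε₀ ≤ χ i - χ j := by linarith
    simp only [hddef]; linarith
  set l : ℝ := (χ i - χ j - ε - ε₀) / d with hldef
  have hld : l * d = χ i - χ j - ε - ε₀ := div_mul_cancel₀ _ (ne_of_gt hd0)
  have hl0 : 0 ≤ l := div_nonneg (by linarith) hd0.le
  have hl1 : l ≤ 1 := (div_le_one hd0).2 (by simp only [hddef]; linarith)
  have hswap : ∀ b : Fin k, χ₀ b = l * χ₁ b + (1 - l) * χ₁ (Equiv.swap i j b) := by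
    intro b
    by_cases hbj : b = j
    · subst hbj
      rw [Equiv.swap_apply_right, hχ₀j, hχ₁j, hχ₁i]
      linear_combination hld
    · by_cases hbi : b = i
      · subst hbi
        rw [Equiv.swap_apply_left, hχ₀i, hχ₁i, hχ₁j]
        linear_combination -hld
      · rw [Equiv.swap_apply_of_ne_of_ne hbi hbj, hχ₀o b hbi hbj, hχ₁o b hbi hbj]
        ring
  set E : Fin n × Fin k ≃ Fin n × Fin k :=
    Equiv.prodCongr (Equiv.refl (Fin n)) (Equiv.swap i j) with hEdef
  have htens : tens φ χ₀ = fun p => l * tens φ χ₁ p + (1 - l) * tens φ χ₁ (E p) := by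
    funext p
    simp only [tens, hEdef, Equiv.prodCongr_apply, Equiv.coe_refl, Prod.map_fst, Prod.map_snd,
      id_eq]
    rw [hswap p.2]
    ring
  refine ⟨⟨?_, ?_⟩, ⟨?_, ?_⟩, ?_⟩
  · -- eSum inequality for tensor products
    intro m hm1 hm2
    calc eSum (tens ψ χ) m ≤ eSum (tens φ χ₀) m := h1.1 m hm1 hm2
      _ ≤ eSum (tens φ χ₁) m := by
          rw [htens]
          exact eSum_comb_equiv_le (tens φ χ₁) E l hl0 hl1 m hm2.le
  · -- equal total sums for tensor products
    calc ∑ p, tens ψ χ p = ∑ p, tens φ χ₀ p := h1.2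
      _ = ∑ p, tens φ χ₁ p := by
          rw [htens]
          rw [Finset.sum_add_distrib, ← Finset.mul_sum, ← Finset.mul_sum,
            Equiv.sum_comp E (tens φ χ₁)]
          ring
  · -- eSum inequality for χ₁ ≺ χ
    intro m hm1 hm2
    rw [hcomb1]
    calc eSum (fun b => (1 - t) * χ b + t * χ₀ b) m
        ≤ (1 - t) * eSum χ m + t * eSum χ₀ m :=
          eSum_comb_le _ _ _ _ (by linarith) ht0 m hm2.le
      _ ≤ (1 - t) * eSum χ m + t * eSum χ m := by
          have := h2.1 m hm1 hm2
          nlinarith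
      _ = eSum χ m := by ring
  · -- equal total sums for χ₁ and χ
    rw [hcomb1]
    rw [Finset.sum_add_distrib, ← Finset.mul_sum, ← Finset.mul_sum, h2.2]
    ring
  · -- χ₁ ≠ χ
    intro h
    have := congrFun h j
    rw [hχ₁j] at this
    linarith
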